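/- Let k be a field, V₆ a 6-dimensional k-vector space, λ ∈ V₆∨ a nonzero linear form, and V₅ = ker(λ). Then for every v ∈ V₆ and all ξ, ξ′ ∈ ⋀³V₆, the element v∧(λ⌟ξ)∧(λ⌟ξ′) − λ(v)·(ξ∧(λ⌟ξ′)) of ⋀⁵V₆ lies in the subspace ⋀⁵V₅. -/

import Mathlib

noncomputable section

/-- For a subspace `U` of `V`, the subspace `⋀ⁿU` of the exterior algebra of `V` spanned by
`n`-fold wedge products of elements of `U`.  Taking `U = ⊤` gives `⋀ⁿV`. -/
def wedgePow {k V : Type*} [Field k] [AddCommGroup V] [Module k V]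
    (U : Submodule k V) (n : ℕ) : Submodule k (ExteriorAlgebra k V) :=
  (Submodule.map (ExteriorAlgebra.ι k) U) ^ n

/-- Left contraction (interior product) by a linear form on the exterior algebra. -/
def contr {k V : Type*} [Field k] [AddCommGroup V] [Module k V]
    (lam : Module.Dual k V) : ExteriorAlgebra k V →ₗ[k] ExteriorAlgebra k V :=
  CliffordAlgebra.contractLeft (Q := (0 : QuadraticForm k V)) lam

section Aux

variable {k V : Type*} [Field k] [AddCommGroup V] [Module k V] (lam : Module.Dual k V)

lemma contr_ι_mul (a : V) (b : ExteriorAlgebra k V) :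
    contr lam (ExteriorAlgebra.ι k a * b) = lam a • b - ExteriorAlgebra.ι k a * contr lam b :=
  CliffordAlgebra.contractLeft_ι_mul (Q := (0 : QuadraticForm k V)) lam a b

lemma contr_algebraMap (r : k) :
    contr lam (algebraMap k (ExteriorAlgebra k V) r) = 0 :=
  CliffordAlgebra.contractLeft_algebraMap (0 : QuadraticForm k V) lam r

lemma mul_mem_pow_add {P : Submodule k (ExteriorAlgebra k V)} {a b : ExteriorAlgebra k V}
    {m n : ℕ} (ha : a ∈ P ^ m) (hb : b ∈ P ^ n) : a * b ∈ P ^ (m + n) := by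
  rw [pow_add]; exact Submodule.mul_mem_mul ha hb

/-- Key decomposition lemma: for `w` with `lam w = 1`, any `ξ ∈ ⋀ⁿV` satisfies
`contr lam ξ ∈ ⋀ⁿ⁻¹(ker lam)` and `ξ - w ∧ (contr lam ξ) ∈ ⋀ⁿ(ker lam)`. -/
lemma contr_decomp (w : V) (hw : lam w = 1) (n : ℕ) {ξ : ExteriorAlgebra k V}
    (hξ : ξ ∈ wedgePow (⊤ : Submodule k V) n) :
    contr lam ξ ∈ wedgePow (LinearMap.ker lam) (n - 1) ∧
      ξ - ExteriorAlgebra.ι k w * contr lam ξ ∈ wedgePow (LinearMap.ker lam) n ∧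
      (n = 0 → contr lam ξ = 0) := by
  set P : Submodule k (ExteriorAlgebra k V) :=
    Submodule.map (ExteriorAlgebra.ι k) (LinearMap.ker lam) with hP
  induction hξ using Submodule.pow_induction_on_left' with
  | algebraMap r =>
      refine ⟨?_, ?_, fun _ => contr_algebraMap lam r⟩
      · rw [contr_algebraMap]; exact zero_mem _
      · rw [contr_algebraMap, mul_zero, sub_zero]
        simpa [wedgePow] using Submodule.algebraMap_mem (S := (P : Submodule k _)^0) r
  | add x y i hx hy ihx ihy =>
      obtain ⟨hx1, hx2, hx3⟩ := ihx
      obtain ⟨hy1, hy2, hy3⟩ := ihy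
      refine ⟨by simpa using add_mem hx1 hy1, ?_, fun h => by simp [hx3 h, hy3 h]⟩
      have : x + y - ExteriorAlgebra.ι k w * contr lam (x + y) =
          (x - ExteriorAlgebra.ι k w * contr lam x) +
          (y - ExteriorAlgebra.ι k w * contr lam y) := by
        rw [map_add, mul_add]; abel
      rw [this]; exact add_mem hx2 hy2
  | mem_mul m hm i x hx ih =>
      obtain ⟨hβ, hα, h0⟩ := ih
      obtain ⟨a, -, rfl⟩ := hm
      -- decompose `a = u + (lam a) • w` with `u ∈ ker lam`
      set u : V := a - lam a • w with hu_def
      have hu : u ∈ LinearMap.ker lam := by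
        simp [hu_def, hw]
      set β := contr lam x with hβ_def
      set α := x - ExteriorAlgebra.ι k w * β with hα_def
      have hιa : ExteriorAlgebra.ι k a
          = ExteriorAlgebra.ι k u + lam a • ExteriorAlgebra.ι k w := by
        simp [hu_def, map_sub, map_smul]
      have hanti : ExteriorAlgebra.ι k u * ExteriorAlgebra.ι k w
          = -(ExteriorAlgebra.ι k w * ExteriorAlgebra.ι k u) := by
        exact eq_neg_of_add_eq_zero_left (ExteriorAlgebra.ι_add_mul_swap u w)
      have hwsq : ExteriorAlgebra.ι k w * ExteriorAlgebra.ι k w = 0 :=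
        ExteriorAlgebra.ι_sq_zero w
      have hcontr : contr lam (ExteriorAlgebra.ι k a * x)
          = lam a • α - ExteriorAlgebra.ι k u * β := by
        rw [contr_ι_mul, hα_def, hιa]
        simp only [smul_sub, sub_mul, add_mul, smul_mul_assoc]
        abel
      have hdecomp : ExteriorAlgebra.ι k a * x
          = ExteriorAlgebra.ι k u * α
            + ExteriorAlgebra.ι k w * (lam a • α - ExteriorAlgebra.ι k u * β) := by
        have hx_eq : x = α + ExteriorAlgebra.ι k w * β := by rw [hα_def]; abel
        rw [hιa]
        calc (ExteriorAlgebra.ι k u + lam a • ExteriorAlgebra.ι k w) * x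
            = ExteriorAlgebra.ι k u * α
              + (ExteriorAlgebra.ι k u * ExteriorAlgebra.ι k w) * β
              + lam a • (ExteriorAlgebra.ι k w * α)
              + lam a • ((ExteriorAlgebra.ι k w * ExteriorAlgebra.ι k w) * β) := by
                rw [hx_eq]; simp only [smul_mul_assoc, mul_add, add_mul, mul_smul_comm,
                  mul_assoc]; abel
          _ = _ := by rw [hanti, hwsq]; simp only [zero_mul, mul_zero, smul_zero, add_zero,
                neg_mul, mul_neg, mul_sub, mul_smul_comm, mul_assoc]; abel
      have hιu : ExteriorAlgebra.ι k u ∈ P := ⟨u, hu, rfl⟩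
      have hcontr_mem : lam a • α - ExteriorAlgebra.ι k u * β ∈ P ^ i := by
        refine sub_mem (Submodule.smul_mem _ _ hα) ?_
        cases i with
        | zero => rw [show β = 0 from h0 rfl, mul_zero]; exact zero_mem _
        | succ j =>
            have : ExteriorAlgebra.ι k u * β ∈ P ^ (1 + j) :=
              mul_mem_pow_add (by simpa [pow_one] using hιu) (by simpa [wedgePow, hP] using hβ)
            simpa [Nat.add_comm] using this
      refine ⟨by rw [hcontr]; simpa [wedgePow, hP] using hcontr_mem, ?_, by omega⟩
      have : ExteriorAlgebra.ι k a * x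
          - ExteriorAlgebra.ι k w * contr lam (ExteriorAlgebra.ι k a * x)
          = ExteriorAlgebra.ι k u * α := by
        rw [hcontr, hdecomp]; abel
      rw [this]
      have : ExteriorAlgebra.ι k u * α ∈ P ^ (1 + i) :=
        mul_mem_pow_add (by simpa [pow_one] using hιu) hα
      simpa [Nat.add_comm, wedgePow, hP] using this

end Aux

/-- For `dim V₆ = 6`, `0 ≠ λ ∈ V₆∨` with kernel `V₅`, every `v ∈ V₆` and all
`ξ, ξ′ ∈ ⋀³V₆`, the element `v∧(λ⌟ξ)∧(λ⌟ξ′) − λ(v)·(ξ∧(λ⌟ξ′))` of `⋀⁵V₆` lies in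
the subspace `⋀⁵V₅`. -/
theorem wedge_contraction_mem_wedge_ker
    {k V₆ : Type*} [Field k] [AddCommGroup V₆] [Module k V₆]
    (hdim : Module.finrank k V₆ = 6)
    (lam : Module.Dual k V₆) (hlam : lam ≠ 0) :
    ∀ (v : V₆), ∀ ξ ∈ wedgePow (⊤ : Submodule k V₆) 3,
      ∀ ξ' ∈ wedgePow (⊤ : Submodule k V₆) 3,
        ExteriorAlgebra.ι k v * contr lam ξ * contr lam ξ' - lam v • (ξ * contr lam ξ')
          ∈ wedgePow (LinearMap.ker lam) 5 := by
  intro v ξ hξ ξ' hξ'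
  -- choose `w` with `lam w = 1`
  obtain ⟨x, hx⟩ : ∃ x, lam x ≠ 0 := by
    by_contra h
    push_neg at h
    exact hlam (LinearMap.ext fun y => by simpa using h y)
  set w : V₆ := (lam x)⁻¹ • x with hw_def
  have hw : lam w = 1 := by simp [hw_def, inv_mul_cancel₀ hx]
  obtain ⟨hβ, hα, -⟩ := contr_decomp lam w hw 3 hξ
  obtain ⟨hβ', hα', -⟩ := contr_decomp lam w hw 3 hξ'
  set P : Submodule k (ExteriorAlgebra k V₆) :=
    Submodule.map (ExteriorAlgebra.ι k) (LinearMap.ker lam) with hP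
  set β := contr lam ξ with hβ_def
  set β' := contr lam ξ' with hβ'_def
  set α := ξ - ExteriorAlgebra.ι k w * β with hα_def
  set u : V₆ := v - lam v • w with hu_def
  have hu : u ∈ LinearMap.ker lam := by simp [hu_def, hw]
  have hιu : ExteriorAlgebra.ι k u ∈ P := ⟨u, hu, rfl⟩
  have key : ExteriorAlgebra.ι k v * β * β' - lam v • (ξ * β')
      = ExteriorAlgebra.ι k u * (β * β') - lam v • (α * β') := by
    have hιv : ExteriorAlgebra.ι k v
        = ExteriorAlgebra.ι k u + lam v • ExteriorAlgebra.ι k w := by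
      simp [hu_def, map_sub, map_smul]
    rw [hιv, hα_def]
    simp only [add_mul, sub_mul, smul_mul_assoc, smul_sub, mul_assoc]
    abel
  rw [key]
  have h1 : ExteriorAlgebra.ι k u * (β * β') ∈ P ^ (1 + (2 + 2)) :=
    mul_mem_pow_add (by simpa [pow_one] using hιu)
      (mul_mem_pow_add (by simpa [wedgePow, hP] using hβ) (by simpa [wedgePow, hP] using hβ'))
  have h2 : α * β' ∈ P ^ (3 + 2) :=
    mul_mem_pow_add hα (by simpa [wedgePow, hP] using hβ')
  exact sub_mem (by simpa [wedgePow, hP] using h1) (Submodule.smul_mem _ _ (by simpa [wedgePow, hP] using h2))
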